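/- arXiv:1508.00187 — 8 statements merged into one kernel-verified Lean document; each statement's English description precedes it below -/
import Mathlib

section
/- For a finite poset P with antichains A and B (A ≠ B), the segment joining ρ(A) and ρ(B) is an edge of the chain polytope C(P) if and only if the symmetric difference (A \ B) ∪ (B \ A) is connected as a subposet of P. -/
/-- Indicator vector of a subset `W` of `P` in `ℝ^P`. -/
noncomputable def rho {P : Type*} (W : Set P) : P → ℝ := W.indicator fun _ => 1

/-- The order polytope of a finite poset `P`. -/
def orderPolytope (P : Type*) [Fintype P] [PartialOrder P] : Set (P → ℝ) :=
  {f | (∀ i, 0 ≤ f i ∧ f i ≤ 1) ∧ ∀ i j : P, i ≤ j → f j ≤ f i}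

/-- The chain polytope of a finite poset `P`. -/
def chainPolytope (P : Type*) [Fintype P] [PartialOrder P] : Set (P → ℝ) :=
  {f | (∀ i, 0 ≤ f i) ∧ ∀ C : Finset P, IsMaxChain (· ≤ ·) (C : Set P) → ∑ i ∈ C, f i ≤ 1}

/-- A subset `S` of a poset `P` is connected in `P` if any two of its elements are
joined by a sequence within `S` whose consecutive members are comparable in `P`. -/
def ConnIn {P : Type*} [PartialOrder P] (S : Set P) : Prop :=
  ∀ x ∈ S, ∀ y ∈ S,
    Relation.ReflTransGen (fun u v => u ∈ S ∧ v ∈ S ∧ (u ≤ v ∨ v ≤ u)) x y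

/-- The segment joining `u` and `v` is an edge (one-dimensional face) of `S`. -/
def IsEdgeOf {E : Type*} [AddCommGroup E] [Module ℝ E] (S : Set E) (u v : E) : Prop :=
  u ≠ v ∧ IsExtreme ℝ S (segment ℝ u v)

/-- The set of maximal elements of a subset of a poset. -/
def maxSet {P : Type*} [PartialOrder P] (S : Set P) : Set P :=
  {x | x ∈ S ∧ ∀ y ∈ S, x ≤ y → x = y}

/-- The set of minimal elements of a subset of a poset. -/
def minSet {P : Type*} [PartialOrder P] (S : Set P) : Set P :=
  {x | x ∈ S ∧ ∀ y ∈ S, y ≤ x → x = y}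

/-- The 1-skeleton of the order polytope, combinatorially: vertices are poset
ideals, adjacency is proper inclusion with connected difference. -/
def orderSkeleton (P : Type*) [PartialOrder P] :
    SimpleGraph {I : Set P // IsLowerSet I} :=
  SimpleGraph.fromRel fun I J => I.1 ⊂ J.1 ∧ ConnIn (J.1 \ I.1)

/-- The 1-skeleton of the chain polytope, combinatorially: vertices are antichains,
adjacency is connectedness of the symmetric difference. -/
def chainSkeleton (P : Type*) [PartialOrder P] :
    SimpleGraph {A : Set P // IsAntichain (· ≤ ·) A} :=
  SimpleGraph.fromRel fun A B => ConnIn ((A.1 \ B.1) ∪ (B.1 \ A.1))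

/-- The multiset of vertex degrees of a graph (the degree sequence, up to order). -/
noncomputable def degMultiset {V : Type*} [Fintype V] (G : SimpleGraph V) : Multiset ℕ :=
  Finset.univ.val.map fun v => (G.neighborSet v).ncard

/-- `P` contains the poset `X = {a,b,c,g,h}` with `a<c, b<c, c<g, c<h` as a subposet. -/
def ContainsX (P : Type*) [PartialOrder P] : Prop :=
  ∃ a b c g h : P, a < c ∧ b < c ∧ c < g ∧ c < h ∧
    ¬ a ≤ b ∧ ¬ b ≤ a ∧ ¬ g ≤ h ∧ ¬ h ≤ g

/-- The pair `(I, J)` of poset ideals with `I ⊂ J` and `J \ I` connected in `P`. -/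
def OmegaP {P : Type*} [PartialOrder P] (I J : Set P) : Prop :=
  IsLowerSet I ∧ IsLowerSet J ∧ I ⊂ J ∧ ConnIn (J \ I)

/-- The pair `(A, B)` of distinct antichains with connected symmetric difference. -/
def PsiP {P : Type*} [PartialOrder P] (A B : Set P) : Prop :=
  IsAntichain (· ≤ ·) A ∧ IsAntichain (· ≤ ·) B ∧ A ≠ B ∧ ConnIn ((A \ B) ∪ (B \ A))

/-- First component of the map `Ω → Ψ`: `A = max J`. -/
def FmapA {P : Type*} [PartialOrder P] (_I J : Set P) : Set P := maxSet J

/-- Second component of the map `Ω → Ψ`: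
`B = min(J \ I) ∪ (max I ∩ max J)`, with `min(J \ I) := ∅` when `|J \ I| = 1`. -/
def FmapB {P : Type*} [PartialOrder P] (I J : Set P) : Set P :=
  (if (J \ I).ncard = 1 then ∅ else minSet (J \ I)) ∪ (maxSet I ∩ maxSet J)

noncomputable instance {P : Type*} [Fintype P] [PartialOrder P] :
    Fintype {I : Set P // IsLowerSet I} := Fintype.ofFinite _

noncomputable instance {P : Type*} [Fintype P] [PartialOrder P] :
    Fintype {A : Set P // IsAntichain (· ≤ ·) A} := Fintype.ofFinite _

/-!
Every point of the segment `[ρ(A), ρ(B)]` lies in the face of `C(P)` cut out by the constraints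
tight at both ends: coordinates `1` on `A ∩ B`, `0` outside `A ∪ B`, and `f p + f q = 1` for
comparable `p ∈ A \ B`, `q ∈ B \ A`. On that face, `f p = 1 - f q` along every comparability
inside `A ∆ B`, so when `A ∆ B` is connected a point of the face is determined by one number and the
face is the segment itself.

If `A ∆ B` is disconnected, swapping `A` and `B` on a union `T` of some but not all of its
components yields antichains `A'`, `B'` with `ρ(A') + ρ(B') = ρ(A) + ρ(B)`. The common midpoint
then lies in the open segment `(ρ(A'), ρ(B'))`, and extremality would put `ρ(A')` on `[ρ(A), ρ(B)]`,
which it is not: it agrees with `ρ(B)` on `T` and with `ρ(A)` off `T`.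
-/

open scoped symmDiff

section Polytope

variable {E : Type*} [AddCommGroup E] [Module ℝ E]

theorem LinearMap.eq_of_mem_openSegment_of_le (l : E →ₗ[ℝ] ℝ) {c : ℝ} {x₁ x₂ x : E}
    (hx : x ∈ openSegment ℝ x₁ x₂) (h₁ : l x₁ ≤ c) (h₂ : l x₂ ≤ c) (h : l x = c) :
    l x₁ = c := by
  obtain ⟨a, b, ha, hb, hab, rfl⟩ := hx
  simp only [map_add, map_smul, smul_eq_mul] at h
  by_contra hne
  have hc : a * c + b * c = c := by rw [← add_mul, hab, one_mul]
  linarith [mul_lt_mul_of_pos_left (lt_of_le_of_ne h₁ hne) ha, mul_le_mul_of_nonneg_left h₂ hb.le]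

theorem IsExtreme.mem_segment_of_add_eq {S : Set E} {x y x' y' : E}
    (h : IsExtreme ℝ S (segment ℝ x y)) (hx' : x' ∈ S) (hy' : y' ∈ S)
    (hsum : x' + y' = x + y) : x' ∈ segment ℝ x y := by
  refine h.left_mem_of_mem_openSegment hx' hy' (z := (2⁻¹ : ℝ) • (x + y))
    ⟨2⁻¹, 2⁻¹, by norm_num, by norm_num, by norm_num, by rw [smul_add]⟩
    ⟨2⁻¹, 2⁻¹, by norm_num, by norm_num, by norm_num, by rw [← smul_add, hsum]⟩

theorem notMem_segment_of_apply_eq {ι : Type*} {x y f : ι → ℝ} {i j : ι}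
    (hi : x i ≠ y i) (hj : x j ≠ y j) (hfi : f i = y i) (hfj : f j = x j) :
    f ∉ segment ℝ x y := by
  rintro ⟨a, b, -, -, hab, rfl⟩
  simp only [Pi.add_apply, Pi.smul_apply, smul_eq_mul] at hfi hfj
  have ha : a * (x i - y i) = 0 := by linear_combination hfi - y i * hab
  have hb : b * (y j - x j) = 0 := by linear_combination hfj - x j * hab
  rw [mul_eq_zero, sub_eq_zero] at ha hb
  rcases ha with rfl | ha
  · rcases hb with rfl | hb
    · norm_num at hab
    · exact hj hb.symm
  · exact hi ha

end Polytope

section Rho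

variable {α : Type*}

theorem rho_injective : Function.Injective (rho : Set α → α → ℝ) :=
  fun _ _ h => Set.indicator_one_inj ℝ h

theorem rho_apply (W : Set α) (i : α) [Decidable (i ∈ W)] :
    rho W i = if i ∈ W then 1 else 0 :=
  Set.indicator_apply W _ i

theorem rho_apply_ne_of_mem_symmDiff {A B : Set α} {i : α} (hi : i ∈ A ∆ B) :
    rho A i ≠ rho B i := by
  classical
  rcases hi with ⟨hA, hB⟩ | ⟨hB, hA⟩ <;> simp [rho_apply, hA, hB]

theorem rho_ite_apply (T A B : Set α) (i : α) [Decidable (i ∈ T)] :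
    rho (T.ite A B) i = if i ∈ T then rho A i else rho B i := by
  classical
  by_cases hT : i ∈ T <;> by_cases hA : i ∈ A <;> by_cases hB : i ∈ B <;>
    simp [rho_apply, Set.ite, hT, hA, hB]

theorem rho_ite_add_rho_ite (T A B : Set α) :
    rho (T.ite B A) + rho (T.ite A B) = rho A + rho B := by
  classical
  funext i
  by_cases hT : i ∈ T <;> simp [rho_ite_apply, hT, add_comm]

end Rho

section Poset

variable {P : Type*} [PartialOrder P]

theorem ConnIn.eq_of_forall_comparable {α : Type*} {S : Set P} (hS : ConnIn S) {g : P → α}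
    (hg : ∀ x ∈ S, ∀ y ∈ S, (x ≤ y ∨ y ≤ x) → g x = g y) {x y : P} (hx : x ∈ S)
    (hy : y ∈ S) : g x = g y := by
  induction hS x hx y hy with
  | refl => rfl
  | tail _ h ih => exact (ih h.1).trans (hg _ h.1 _ h.2.1 h.2.2)

theorem exists_separation_of_not_connIn {S : Set P} (h : ¬ ConnIn S) :
    ∃ T ⊆ S, T.Nonempty ∧ (S \ T).Nonempty ∧ ∀ x ∈ T, ∀ y ∈ S \ T, ¬(x ≤ y ∨ y ≤ x) := by
  simp only [ConnIn, not_forall] at h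
  obtain ⟨u, hu, v, hv, huv⟩ := h
  set r : P → P → Prop := fun a b => a ∈ S ∧ b ∈ S ∧ (a ≤ b ∨ b ≤ a)
  refine ⟨{z ∈ S | Relation.ReflTransGen r u z}, Set.sep_subset _ _, ⟨u, hu, .refl⟩,
    ⟨v, hv, fun hv' => huv hv'.2⟩, ?_⟩
  rintro x ⟨hxS, hx⟩ y ⟨hyS, hy⟩ hxy
  exact hy ⟨hyS, hx.tail ⟨hxS, hyS, hxy⟩⟩

theorem isAntichain_ite {A B T : Set P} (hA : IsAntichain (· ≤ ·) A)
    (hB : IsAntichain (· ≤ ·) B) (hsep : ∀ x ∈ T, ∀ y ∈ A ∆ B \ T, ¬(x ≤ y ∨ y ≤ x)) :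
    IsAntichain (· ≤ ·) (T.ite B A) := by
  rintro x (⟨hxB, hxT⟩ | ⟨hxA, hxT⟩) y (⟨hyB, hyT⟩ | ⟨hyA, hyT⟩) hxy hle
  · exact hB hxB hyB hxy hle
  · by_cases hyB : y ∈ B
    · exact hB hxB hyB hxy hle
    · exact hsep x hxT y ⟨Or.inl ⟨hyA, hyB⟩, hyT⟩ (Or.inl hle)
  · by_cases hxB : x ∈ B
    · exact hB hxB hyB hxy hle
    · exact hsep y hyT x ⟨Or.inl ⟨hxA, hxB⟩, hxT⟩ (Or.inr hle)
  · exact hA hxA hyA hxy hle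

section ChainPolytope

variable [Fintype P]

theorem convex_chainPolytope : Convex ℝ (chainPolytope P) := by
  intro f hf g hg a b ha hb hab
  refine ⟨fun i => add_nonneg (mul_nonneg ha (hf.1 i)) (mul_nonneg hb (hg.1 i)), fun C hC => ?_⟩
  simp only [Pi.add_apply, Pi.smul_apply, smul_eq_mul, Finset.sum_add_distrib, ← Finset.mul_sum]
  nlinarith [hf.2 C hC, hg.2 C hC]

theorem sum_le_one_of_mem_chainPolytope {f : P → ℝ} (hf : f ∈ chainPolytope P)
    {s : Finset P} (hs : IsChain (· ≤ ·) (s : Set P)) : ∑ i ∈ s, f i ≤ 1 := by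
  obtain ⟨C, hC, hsC⟩ := hs.exists_maxChain
  calc ∑ i ∈ s, f i ≤ ∑ i ∈ C.toFinite.toFinset, f i :=
        Finset.sum_le_sum_of_subset_of_nonneg (by simpa using hsC) fun i _ _ => hf.1 i
    _ ≤ 1 := hf.2 _ (by simpa using hC)

theorem apply_le_one_of_mem_chainPolytope {f : P → ℝ} (hf : f ∈ chainPolytope P) (i : P) :
    f i ≤ 1 := by
  simpa using sum_le_one_of_mem_chainPolytope hf (s := {i}) (by simp)

theorem add_le_one_of_mem_chainPolytope {f : P → ℝ} (hf : f ∈ chainPolytope P) {x y : P}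
    (hne : x ≠ y) (hxy : x ≤ y ∨ y ≤ x) : f x + f y ≤ 1 := by
  classical
  have hchain : IsChain (· ≤ ·) (({x, y} : Finset P) : Set P) := by
    rw [Finset.coe_pair]
    exact Set.subsingleton_singleton.isChain.insert (by simpa [hne] using hxy)
  simpa [Finset.sum_pair hne] using sum_le_one_of_mem_chainPolytope hf hchain

theorem rho_mem_chainPolytope {A : Set P} (hA : IsAntichain (· ≤ ·) A) :
    rho A ∈ chainPolytope P := by
  classical
  refine ⟨fun i => by rw [rho_apply]; positivity, fun C hC => ?_⟩
  simp only [rho_apply, Finset.sum_boole, Nat.cast_le_one, Finset.card_le_one,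
    Finset.mem_filter]
  exact fun x hx y hy =>
    inter_subsingleton_of_isChain_of_isAntichain hC.1 hA ⟨hx.1, hx.2⟩ ⟨hy.1, hy.2⟩

/-- The face of `chainPolytope P` cut out by the constraints that are tight at both `rho A` and
`rho B`, for antichains `A` and `B`. -/
def tightFace (A B : Set P) : Set (P → ℝ) :=
  {f ∈ chainPolytope P | (∀ i ∈ A ∩ B, f i = 1) ∧ (∀ i ∉ A ∪ B, f i = 0) ∧
    ∀ p ∈ A \ B, ∀ q ∈ B \ A, (p ≤ q ∨ q ≤ p) → f p + f q = 1}

theorem isExtreme_tightFace (A B : Set P) : IsExtreme ℝ (chainPolytope P) (tightFace A B) := by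
  refine ⟨Set.sep_subset _ _, fun x₁ h₁ x₂ h₂ x ⟨_, hx1, hx0, hxpair⟩ hx => ⟨h₁, ?_, ?_, ?_⟩⟩
  · intro i hi
    exact (LinearMap.proj i).eq_of_mem_openSegment_of_le hx
      (apply_le_one_of_mem_chainPolytope h₁ i) (apply_le_one_of_mem_chainPolytope h₂ i) (hx1 i hi)
  · intro i hi
    simpa using (-LinearMap.proj i).eq_of_mem_openSegment_of_le hx (c := 0)
      (by simpa using h₁.1 i) (by simpa using h₂.1 i) (by simp [hx0 i hi])
  · intro p hp q hq hpq
    have hne : p ≠ q := fun h => hp.2 (h ▸ hq.1)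
    exact ((LinearMap.proj p : (P → ℝ) →ₗ[ℝ] ℝ) + LinearMap.proj q).eq_of_mem_openSegment_of_le hx
      (add_le_one_of_mem_chainPolytope h₁ hne hpq) (add_le_one_of_mem_chainPolytope h₂ hne hpq)
      (hxpair p hp q hq hpq)

theorem segment_subset_tightFace {A B : Set P} (hA : IsAntichain (· ≤ ·) A)
    (hB : IsAntichain (· ≤ ·) B) : segment ℝ (rho A) (rho B) ⊆ tightFace A B := by
  classical
  intro f hf
  refine ⟨convex_chainPolytope.segment_subset (rho_mem_chainPolytope hA)
    (rho_mem_chainPolytope hB) hf, ?_⟩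
  obtain ⟨a, b, -, -, hab, rfl⟩ := hf
  refine ⟨fun i hi => ?_, fun i hi => ?_, fun p hp q hq _ => ?_⟩
  · simp [rho_apply, hi.1, hi.2, hab]
  · simp only [Set.mem_union, not_or] at hi
    simp [rho_apply, hi.1, hi.2]
  · simp [rho_apply, hp.1, hp.2, hq.1, hq.2]
    linarith

theorem exists_apply_eq_of_mem_tightFace {A B : Set P} (hA : IsAntichain (· ≤ ·) A)
    (hB : IsAntichain (· ≤ ·) B) (hconn : ConnIn (A ∆ B)) {f : P → ℝ} (hf : f ∈ tightFace A B) :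
    ∃ s ∈ Set.Icc (0 : ℝ) 1, (∀ i ∈ A \ B, f i = s) ∧ ∀ i ∈ B \ A, f i = 1 - s := by
  classical
  obtain ⟨hfC, -, -, hfpair⟩ := hf
  set g : P → ℝ := fun z => if z ∈ A then f z else 1 - f z
  have hg : ∀ x ∈ A ∆ B, ∀ y ∈ A ∆ B, (x ≤ y ∨ y ≤ x) → g x = g y := by
    rintro x (hx | hx) y (hy | hy) hxy
    · obtain rfl := hxy.elim (hA.eq hx.1 hy.1) (hA.eq' hx.1 hy.1)
      rfl
    · have := hfpair x hx y hy hxy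
      simp only [g, if_pos hx.1, if_neg hy.2]
      linarith
    · have := hfpair y hy x hx hxy.symm
      simp only [g, if_neg hx.2, if_pos hy.1]
      linarith
    · obtain rfl := hxy.elim (hB.eq hx.1 hy.1) (hB.eq' hx.1 hy.1)
      rfl
  obtain ⟨s, hs01, hs⟩ : ∃ s ∈ Set.Icc (0 : ℝ) 1, ∀ z ∈ A ∆ B, g z = s := by
    rcases (A ∆ B).eq_empty_or_nonempty with hD | ⟨x₀, hx₀⟩
    · exact ⟨0, by simp, by simp [hD]⟩
    · refine ⟨g x₀, ?_, fun z hz => hconn.eq_of_forall_comparable hg hz hx₀⟩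
      have := hfC.1 x₀
      have := apply_le_one_of_mem_chainPolytope hfC x₀
      simp only [g, Set.mem_Icc]
      split_ifs <;> constructor <;> linarith
  refine ⟨s, hs01, fun i hi => ?_, fun i hi => ?_⟩
  · simpa [g, hi.1] using hs i (Or.inl hi)
  · have := hs i (Or.inr hi)
    simp only [g, if_neg hi.2] at this
    linarith

theorem tightFace_subset_segment {A B : Set P} (hA : IsAntichain (· ≤ ·) A)
    (hB : IsAntichain (· ≤ ·) B) (hconn : ConnIn (A ∆ B)) :
    tightFace A B ⊆ segment ℝ (rho A) (rho B) := by
  classical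
  intro f hf
  obtain ⟨s, ⟨hs0, hs1⟩, hfA, hfB⟩ := exists_apply_eq_of_mem_tightFace hA hB hconn hf
  obtain ⟨-, hf1, hf0, -⟩ := hf
  refine ⟨s, 1 - s, hs0, by linarith, by ring, funext fun i => ?_⟩
  simp only [Pi.add_apply, Pi.smul_apply, smul_eq_mul, rho_apply]
  by_cases hiA : i ∈ A <;> by_cases hiB : i ∈ B
  · simp [hiA, hiB, hf1 i ⟨hiA, hiB⟩]
  · simp [hiA, hiB, hfA i ⟨hiA, hiB⟩]
  · simp [hiA, hiB, hfB i ⟨hiB, hiA⟩]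
  · simp [hiA, hiB, hf0 i (by simp [hiA, hiB])]

end ChainPolytope

end Poset

theorem stmt1 {P : Type*} [Fintype P] [PartialOrder P] (A B : Set P)
    (hA : IsAntichain (· ≤ ·) A) (hB : IsAntichain (· ≤ ·) B) (hne : A ≠ B) :
    IsEdgeOf (chainPolytope P) (rho A) (rho B) ↔ ConnIn ((A \ B) ∪ (B \ A)) := by
  classical
  rw [← Set.symmDiff_def]
  constructor
  · rintro ⟨-, hext⟩
    by_contra hconn
    obtain ⟨T, hTD, ⟨u, hu⟩, ⟨v, hv⟩, hsep⟩ := exists_separation_of_not_connIn hconn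
    have hsep' : ∀ x ∈ T, ∀ y ∈ B ∆ A \ T, ¬(x ≤ y ∨ y ≤ x) := by rwa [symmDiff_comm]
    have hmem := hext.mem_segment_of_add_eq (rho_mem_chainPolytope (isAntichain_ite hA hB hsep))
      (rho_mem_chainPolytope (isAntichain_ite hB hA hsep')) (rho_ite_add_rho_ite T A B)
    refine notMem_segment_of_apply_eq (rho_apply_ne_of_mem_symmDiff (hTD hu))
      (rho_apply_ne_of_mem_symmDiff hv.1) ?_ ?_ hmem
    · simp [rho_ite_apply, hu]
    · simp [rho_ite_apply, hv.2]
  · intro hconn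
    refine ⟨rho_injective.ne hne, ?_⟩
    rw [(segment_subset_tightFace hA hB).antisymm (tightFace_subset_segment hA hB hconn)]
    exact isExtreme_tightFace A B
end

section
/- The vertices of the order polytope O(P) are exactly the indicator vectors ρ(I) of poset ideals I of P. -/
private lemma seg_coord (a b u w v : ℝ) (ha : 0 < a) (hb : 0 < b) (hab : a + b = 1)
    (hu : 0 ≤ u) (hu1 : u ≤ 1) (hw : 0 ≤ w) (hw1 : w ≤ 1)
    (heq : a * u + b * w = v) (hv : v = 0 ∨ v = 1) : u = v ∧ w = v := by
  rcases hv with rfl | rfl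
  · have h1 : a * u = 0 := by nlinarith [mul_nonneg ha.le hu, mul_nonneg hb.le hw]
    have h2 : b * w = 0 := by nlinarith [mul_nonneg ha.le hu, mul_nonneg hb.le hw]
    exact ⟨(mul_eq_zero.mp h1).resolve_left ha.ne', (mul_eq_zero.mp h2).resolve_left hb.ne'⟩
  · have h1 : a * (1 - u) = 0 := by
      nlinarith [mul_nonneg ha.le (sub_nonneg.mpr hu1), mul_nonneg hb.le (sub_nonneg.mpr hw1)]
    have h2 : b * (1 - w) = 0 := by
      nlinarith [mul_nonneg ha.le (sub_nonneg.mpr hu1), mul_nonneg hb.le (sub_nonneg.mpr hw1)]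
    constructor
    · have := (mul_eq_zero.mp h1).resolve_left ha.ne'; linarith
    · have := (mul_eq_zero.mp h2).resolve_left hb.ne'; linarith

theorem stmt2 {P : Type*} [Fintype P] [PartialOrder P] :
    (orderPolytope P).extremePoints ℝ = {v | ∃ I : Set P, IsLowerSet I ∧ v = rho I} := by
  classical
  ext f
  simp only [Set.mem_setOf_eq, mem_extremePoints]
  constructor
  · rintro ⟨hf, hext⟩
    have h01 : ∀ i, f i = 0 ∨ f i = 1 := by
      intro i
      by_contra hi
      push_neg at hi
      obtain ⟨hi0, hi1⟩ := hi
      have ht0 : 0 < f i := lt_of_le_of_ne (hf.1 i).1 (Ne.symm hi0)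
      have ht1 : f i < 1 := lt_of_le_of_ne (hf.1 i).2 hi1
      set t := f i with ht
      set S : Finset ℝ := insert t (insert (1 - t)
        ((Finset.univ.filter (fun j => f j ≠ t)).image (fun j => |f j - t|))) with hS
      have hSne : S.Nonempty := ⟨t, Finset.mem_insert_self _ _⟩
      set ε := S.min' hSne with hεdef
      have hεmem := S.min'_mem hSne
      have hpos : ∀ x ∈ S, 0 < x := by
        intro x hx
        simp only [hS, Finset.mem_insert, Finset.mem_image, Finset.mem_filter] at hx
        rcases hx with rfl | rfl | ⟨j, ⟨_, hj⟩, rfl⟩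
        · exact ht0
        · linarith
        · exact abs_pos.mpr (sub_ne_zero.mpr hj)
      have hεpos : 0 < ε := hpos _ hεmem
      have hεt : ε ≤ t := S.min'_le t (Finset.mem_insert_self _ _)
      have hε1t : ε ≤ 1 - t := S.min'_le _ (by simp [hS])
      have hεj : ∀ j, f j ≠ t → ε ≤ |f j - t| := by
        intro j hj
        refine S.min'_le _ ?_
        simp only [hS, Finset.mem_insert, Finset.mem_image, Finset.mem_filter]
        exact Or.inr (Or.inr ⟨j, ⟨Finset.mem_univ j, hj⟩, rfl⟩)
      set g : P → ℝ := fun j => if f j = t then t + ε else f j with hgdef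
      set h : P → ℝ := fun j => if f j = t then t - ε else f j with hhdef
      have hgval : ∀ j, g j = if f j = t then t + ε else f j := fun j => rfl
      have hhval : ∀ j, h j = if f j = t then t - ε else f j := fun j => rfl
      have hmono : ∀ {j k : P}, j ≤ k → f k ≤ f j := fun {j k} hjk => hf.2 j k hjk
      have hgmem : g ∈ orderPolytope P := by
        refine ⟨fun j => ?_, fun j k hjk => ?_⟩
        · rw [hgval]
          by_cases hj : f j = t
          · rw [if_pos hj]; constructor <;> linarith
          · rw [if_neg hj]; exact hf.1 j
        · rw [hgval, hgval]
          have hfk := hmono hjk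
          by_cases hj : f j = t <;> by_cases hk : f k = t
          · rw [if_pos hj, if_pos hk]
          · rw [if_pos hj, if_neg hk]
            have : f k ≤ t := hj ▸ hfk
            linarith
          · rw [if_neg hj, if_pos hk]
            have h1 : t ≤ f j := hk ▸ hfk
            have h2 : ε ≤ |f j - t| := hεj j hj
            rw [abs_of_nonneg (by linarith)] at h2
            linarith
          · rw [if_neg hj, if_neg hk]; exact hfk
      have hhmem : h ∈ orderPolytope P := by
        refine ⟨fun j => ?_, fun j k hjk => ?_⟩
        · rw [hhval]
          by_cases hj : f j = t
          · rw [if_pos hj]; constructor <;> linarith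
          · rw [if_neg hj]; exact hf.1 j
        · rw [hhval, hhval]
          have hfk := hmono hjk
          by_cases hj : f j = t <;> by_cases hk : f k = t
          · rw [if_pos hj, if_pos hk]
          · rw [if_pos hj, if_neg hk]
            have h1 : f k ≤ t := hj ▸ hfk
            have h2 : ε ≤ |f k - t| := hεj k hk
            rw [abs_of_nonpos (by linarith)] at h2
            linarith
          · rw [if_neg hj, if_pos hk]
            have h1 : t ≤ f j := hk ▸ hfk
            linarith
          · rw [if_neg hj, if_neg hk]; exact hfk
      have hseg : f ∈ openSegment ℝ g h := by
        refine ⟨1/2, 1/2, by norm_num, by norm_num, by norm_num, ?_⟩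
        funext j
        simp only [Pi.add_apply, Pi.smul_apply, smul_eq_mul]
        rw [hgval, hhval]
        by_cases hj : f j = t
        · rw [if_pos hj, if_pos hj, hj]; ring
        · rw [if_neg hj, if_neg hj]; ring
      have hgf : g = f := (hext g hgmem h hhmem hseg).1
      have : g i = f i := congrFun hgf i
      rw [hgval, if_pos rfl] at this
      rw [← ht] at this
      linarith
    refine ⟨{j | f j = 1}, ?_, ?_⟩
    · intro a b hba ha
      have h1 : f a ≤ f b := hf.2 b a hba
      have h2 := (hf.1 b).2
      have ha' : f a = 1 := ha
      show f b = 1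
      linarith
    · funext j
      rcases h01 j with hj | hj <;>
        simp [rho, Set.indicator_apply, hj]
  · rintro ⟨I, hI, rfl⟩
    have hmem : rho I ∈ orderPolytope P := by
      refine ⟨fun j => ?_, fun j k hjk => ?_⟩
      · by_cases hj : j ∈ I <;> simp [rho, Set.indicator_apply, hj]
      · by_cases hk : k ∈ I
        · have hj : j ∈ I := hI hjk hk
          simp [rho, Set.indicator_apply, hj, hk]
        · simp only [rho, Set.indicator_apply, if_neg hk]
          by_cases hj : j ∈ I <;> simp [hj]
    refine ⟨hmem, ?_⟩
    intro x₁ hx₁ x₂ hx₂ hseg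
    obtain ⟨a, b, ha, hb, hab, heq⟩ := hseg
    have key : ∀ j, x₁ j = rho I j ∧ x₂ j = rho I j := by
      intro j
      have hj := congrFun heq j
      simp only [Pi.add_apply, Pi.smul_apply, smul_eq_mul] at hj
      have hv : rho I j = 0 ∨ rho I j = 1 := by
        by_cases hjI : j ∈ I <;> simp [rho, Set.indicator_apply, hjI]
      exact seg_coord a b (x₁ j) (x₂ j) (rho I j) ha hb hab
        (hx₁.1 j).1 (hx₁.1 j).2 (hx₂.1 j).1 (hx₂.1 j).2 hj hv
    exact ⟨funext fun j => (key j).1, funext fun j => (key j).2⟩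
end

section
/- Let P be a finite poset and let A, B be antichains of P whose symmetric difference (A \ B) ∪ (B \ A) is connected in P. If there exist x, x' ∈ A and y, y' ∈ B with x < y and y' < x', then a contradiction follows; i.e., such a configuration cannot occur. -/
theorem stmt6 {P : Type*} [Fintype P] [PartialOrder P] (A B : Set P)
    (hA : IsAntichain (· ≤ ·) A) (hB : IsAntichain (· ≤ ·) B)
    (hconn : ConnIn ((A \ B) ∪ (B \ A)))
    (x x' y y' : P) (hx : x ∈ A) (hx' : x' ∈ A) (hy : y ∈ B) (hy' : y' ∈ B)
    (h1 : x < y) (h2 : y' < x') : False := by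
  have hxAB : x ∈ A \ B := ⟨hx, fun hxB => hB hxB hy h1.ne h1.le⟩
  have hx'AB : x' ∈ A \ B := ⟨hx', fun h => hB hy' h h2.ne h2.le⟩
  set S := (A \ B) ∪ (B \ A) with hS
  have hpath := hconn x (Or.inl hxAB) x' (Or.inl hx'AB)
  have key : ∀ u, Relation.ReflTransGen (fun u v => u ∈ S ∧ v ∈ S ∧ (u ≤ v ∨ v ≤ u)) x u →
      (u ∈ A \ B ∧ ∀ b ∈ B, ¬ b < u) ∨ (u ∈ B \ A ∧ ∀ a ∈ A, ¬ u < a) := by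
    intro u hu
    induction hu with
    | refl =>
      exact Or.inl ⟨hxAB, fun b hb hlt => hB hb hy (hlt.trans h1).ne (hlt.trans h1).le⟩
    | @tail u v _ step ih =>
      obtain ⟨_, hvS, hcomp⟩ := step
      rcases ih with ⟨huA, hub⟩ | ⟨huB, hua⟩
      · rcases hvS with hvA | hvB
        · -- both in A: must be equal
          by_cases heq : u = v
          · exact heq ▸ Or.inl ⟨huA, hub⟩
          · rcases hcomp with hle | hle
            · exact absurd hle (hA huA.1 hvA.1 heq)
            · exact absurd hle (hA hvA.1 huA.1 (Ne.symm heq))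
        · have hne : u ≠ v := fun h => hvB.2 (h ▸ huA.1)
          have hlt : u < v := by
            rcases hcomp with hle | hle
            · exact lt_of_le_of_ne hle hne
            · exact absurd (lt_of_le_of_ne hle (Ne.symm hne)) (hub v hvB.1)
          exact Or.inr ⟨hvB, fun a ha hva =>
            hA huA.1 ha (hlt.trans hva).ne (hlt.trans hva).le⟩
      · rcases hvS with hvA | hvB
        · have hne : u ≠ v := fun h => huB.2 (h ▸ hvA.1)
          have hlt : v < u := by
            rcases hcomp with hle | hle
            · exact absurd (lt_of_le_of_ne hle hne) (hua v hvA.1)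
            · exact lt_of_le_of_ne hle (Ne.symm hne)
          exact Or.inl ⟨hvA, fun b hb hbv =>
            hB hb huB.1 (hbv.trans hlt).ne (hbv.trans hlt).le⟩
        · by_cases heq : u = v
          · exact heq ▸ Or.inr ⟨huB, hua⟩
          · rcases hcomp with hle | hle
            · exact absurd hle (hB huB.1 hvB.1 heq)
            · exact absurd hle (hB hvB.1 huB.1 (Ne.symm heq))
  rcases key x' hpath with ⟨_, hb⟩ | ⟨hmem, _⟩
  · exact hb y' hy' h2
  · exact hmem.2 hx'AB.1
end

section
/- The map sending a pair (I,J) of poset ideals with I ⊂ J, I ≠ J, and J \ I connected in P to the pair (A,B) with A = max(J) and B = min(J \ I) ∪ (max(I) ∩ max(J)) (setting min(J \ I) = ∅ if |J \ I| = 1) is a well-defined injection into the set of pairs (A,B) of distinct antichains whose symmetric difference is connected in P. -/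
/-!
`A = max J` determines `J` as its lower closure. Writing `D = J \ I`, one computes
`A \ B = max D` and `B \ A = min D` (or `∅` when `D` is a single point); the only subtle
point is that no element of `min D` is maximal in `J`, since a connected `D` with more than
one point has no element that is both minimal and maximal. Hence `A ∆ B` is nonempty and,
as every element of `D` lies above a minimal one, connected; and `I` is recovered as the
part of `J` not above any element of `A ∆ B`.
-/

open Relation

section MinMax

variable {P : Type*} [PartialOrder P] {S T : Set P} {x : P}

lemma maxSet_eq_setOf_maximal (S : Set P) : maxSet S = {x | Maximal (· ∈ S) x} := by
  ext x
  exact maximal_iff.symm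

lemma minSet_eq_setOf_minimal (S : Set P) : minSet S = {x | Minimal (· ∈ S) x} := by
  ext x
  exact minimal_iff.symm

lemma maxSet_subset : maxSet S ⊆ S := fun _ hx => hx.1

lemma minSet_subset : minSet S ⊆ S := fun _ hx => hx.1

lemma isAntichain_maxSet (S : Set P) : IsAntichain (· ≤ ·) (maxSet S) := by
  rw [maxSet_eq_setOf_maximal]
  exact setOfPred_maximal_antichain _

lemma isAntichain_minSet (S : Set P) : IsAntichain (· ≤ ·) (minSet S) := by
  rw [minSet_eq_setOf_minimal]
  exact setOfPred_minimal_antichain _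

lemma Set.Finite.exists_le_mem_maxSet (hS : S.Finite) (hx : x ∈ S) :
    ∃ M ∈ maxSet S, x ≤ M := by
  obtain ⟨M, hxM, hM⟩ := hS.exists_le_maximal hx
  exact ⟨M, maximal_iff.mp hM, hxM⟩

lemma Set.Finite.exists_mem_minSet_le (hS : S.Finite) (hx : x ∈ S) :
    ∃ m ∈ minSet S, m ≤ x := by
  obtain ⟨m, hmx, hm⟩ := hS.exists_le_minimal hx
  exact ⟨m, minimal_iff.mp hm, hmx⟩

lemma Set.Subsingleton.maxSet_eq (hS : S.Subsingleton) : maxSet S = S :=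
  maxSet_subset.antisymm fun _ hx => ⟨hx, fun _ hy _ => hS hx hy⟩

lemma maxSet_inter_subset_maxSet (hTS : T ⊆ S) : maxSet S ∩ T ⊆ maxSet T :=
  fun _ ⟨hx, hxT⟩ => ⟨hxT, fun y hy => hx.2 y (hTS hy)⟩

lemma maxSet_diff_of_isLowerSet (hT : IsLowerSet T) : maxSet (S \ T) = maxSet S \ T := by
  ext x
  constructor
  · rintro ⟨⟨hxS, hxT⟩, hx⟩
    exact ⟨⟨hxS, fun y hyS hxy => hx y ⟨hyS, fun hyT => hxT (hT hxy hyT)⟩ hxy⟩, hxT⟩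
  · rintro ⟨⟨hxS, hx⟩, hxT⟩
    exact ⟨⟨hxS, hxT⟩, fun y hy => hx y hy.1⟩

end MinMax

section Connected

variable {P : Type*} [PartialOrder P] {S : Set P} {x : P}

lemma Set.Subsingleton.connIn (hS : S.Subsingleton) : ConnIn S := by
  intro _ hx _ hy
  rw [hS hx hy]

lemma ConnIn.eq_singleton_of_mem_minSet_of_mem_maxSet (hS : ConnIn S) (hmin : x ∈ minSet S)
    (hmax : x ∈ maxSet S) : S = {x} := by
  refine Set.eq_singleton_iff_unique_mem.mpr ⟨hmin.1, fun y hy => ?_⟩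
  obtain hxy := hS x hmin.1 y hy
  clear hy
  induction hxy with
  | refl => rfl
  | tail _ hbc ih =>
    obtain ⟨_, hc, hcomp⟩ := hbc
    subst ih
    rcases hcomp with hxc | hcx
    · exact (hmax.2 _ hc hxc).symm
    · exact (hmin.2 _ hc hcx).symm

/-- Every element of `S` lies above a minimal one, and two minimal elements below comparable
elements of `S` are both below a maximal element of `S`. -/
lemma ConnIn.minSet_union_maxSet (hfin : S.Finite) (hS : ConnIn S) :
    ConnIn (minSet S ∪ maxSet S) := by
  set R : P → P → Prop := fun u v =>
    u ∈ minSet S ∪ maxSet S ∧ v ∈ minSet S ∪ maxSet S ∧ (u ≤ v ∨ v ≤ u)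
  choose! f hf using fun x (hx : x ∈ S) => hfin.exists_mem_minSet_le hx
  have link : ∀ x ∈ S, ∀ y ∈ S, ∀ z ∈ S, x ≤ z → y ≤ z →
      ReflTransGen R (f x) (f y) := by
    intro x hx y hy z hz hxz hyz
    obtain ⟨M, hM, hzM⟩ := hfin.exists_le_mem_maxSet hz
    have hxM : f x ≤ M := (hf x hx).2.trans (hxz.trans hzM)
    have hyM : f y ≤ M := (hf y hy).2.trans (hyz.trans hzM)
    exact (ReflTransGen.single ⟨.inl (hf x hx).1, .inr hM, .inl hxM⟩).tail
      ⟨.inr hM, .inl (hf y hy).1, .inr hyM⟩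
  have hlinked : ∀ x ∈ S, ∀ y ∈ S, ReflTransGen R (f x) (f y) := fun x hx y hy =>
    ReflTransGen.lift' f (fun u v ⟨hu, hv, huv⟩ => huv.elim
      (fun h => link u hu v hv v hv h le_rfl) (fun h => link u hu v hv u hu le_rfl h))
      x y (hS x hx y hy)
  intro u hu v hv
  have huS : u ∈ S := hu.elim (fun h => minSet_subset h) (fun h => maxSet_subset h)
  have hvS : v ∈ S := hv.elim (fun h => minSet_subset h) (fun h => maxSet_subset h)
  exact ((ReflTransGen.single ⟨hu, .inl (hf u huS).1, .inr (hf u huS).2⟩).trans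
    (hlinked u huS v hvS)).tail ⟨.inl (hf v hvS).1, hv, .inl (hf v hvS).2⟩

end Connected

section Fmap

variable {P : Type*} [PartialOrder P] {I J : Set P} {b : P}

lemma OmegaP.notMem_maxSet_of_mem_minSet (h : OmegaP I J) (hD : (J \ I).ncard ≠ 1)
    (hb : b ∈ minSet (J \ I)) : b ∉ maxSet J := fun hbJ => by
  have hbD : b ∈ maxSet (J \ I) := by
    rw [maxSet_diff_of_isLowerSet h.1]
    exact ⟨hbJ, hb.1.2⟩
  apply hD
  rw [h.2.2.2.eq_singleton_of_mem_minSet_of_mem_maxSet hb hbD, Set.ncard_singleton]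

lemma OmegaP.disjoint_ite_minSet_maxSet (h : OmegaP I J) :
    Disjoint (if (J \ I).ncard = 1 then ∅ else minSet (J \ I)) (maxSet J) := by
  split_ifs with hD
  · exact Set.empty_disjoint _
  · exact Set.disjoint_left.mpr fun _ => h.notMem_maxSet_of_mem_minSet hD

lemma OmegaP.fmapA_diff_fmapB (h : OmegaP I J) : FmapA I J \ FmapB I J = maxSet (J \ I) := by
  rw [maxSet_diff_of_isLowerSet h.1]
  ext a
  simp only [FmapA, FmapB, Set.mem_sdiff, Set.mem_union, Set.mem_inter_iff, not_or, not_and]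
  constructor
  · rintro ⟨ha, -, hnot⟩
    exact ⟨ha, fun haI => hnot (maxSet_inter_subset_maxSet h.2.2.1.subset ⟨ha, haI⟩) ha⟩
  · rintro ⟨ha, haI⟩
    exact ⟨ha, Set.disjoint_right.mp h.disjoint_ite_minSet_maxSet ha, fun haI' _ => haI haI'.1⟩

lemma OmegaP.fmapB_diff_fmapA (h : OmegaP I J) :
    FmapB I J \ FmapA I J = if (J \ I).ncard = 1 then ∅ else minSet (J \ I) := by
  ext b
  simp only [FmapA, FmapB, Set.mem_sdiff, Set.mem_union, Set.mem_inter_iff]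
  constructor
  · rintro ⟨hb | hb, hbJ⟩
    · exact hb
    · exact absurd hb.2 hbJ
  · intro hb
    exact ⟨.inl hb, Set.disjoint_left.mp h.disjoint_ite_minSet_maxSet hb⟩

lemma OmegaP.isAntichain_fmapB (h : OmegaP I J) : IsAntichain (· ≤ ·) (FmapB I J) := by
  have hmin : IsAntichain (· ≤ ·) (if (J \ I).ncard = 1 then ∅ else minSet (J \ I)) := by
    split_ifs
    · exact Set.subsingleton_empty.isAntichain _
    · exact isAntichain_minSet _
  have hsub : (if (J \ I).ncard = 1 then ∅ else minSet (J \ I)) ⊆ J \ I := by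
    split_ifs
    · exact Set.empty_subset _
    · exact minSet_subset
  refine isAntichain_union.mpr ⟨hmin, (isAntichain_maxSet J).subset Set.inter_subset_right,
    fun a ha c hc _ => ⟨fun hle => (hsub ha).2 (h.1 hle hc.1.1), fun hle => ?_⟩⟩
  exact (hsub ha).2 (hc.2.2 a (hsub ha).1 hle ▸ hc.1.1)

lemma OmegaP.connIn_symmDiff_fmap (h : OmegaP I J) (hfin : (J \ I).Finite) :
    ConnIn ((FmapA I J \ FmapB I J) ∪ (FmapB I J \ FmapA I J)) := by
  rw [h.fmapA_diff_fmapB, h.fmapB_diff_fmapA]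
  split_ifs with hD
  · obtain ⟨x, hx⟩ := Set.ncard_eq_one.mp hD
    rw [Set.union_empty, hx]
    exact (Set.subsingleton_singleton.anti maxSet_subset).connIn
  · rw [Set.union_comm]
    exact h.2.2.2.minSet_union_maxSet hfin

lemma OmegaP.psiP_fmap (h : OmegaP I J) (hfin : (J \ I).Finite) :
    PsiP (FmapA I J) (FmapB I J) := by
  refine ⟨isAntichain_maxSet J, h.isAntichain_fmapB, fun hAB => ?_, h.connIn_symmDiff_fmap hfin⟩
  obtain ⟨x, hx⟩ := Set.nonempty_of_ssubset h.2.2.1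
  obtain ⟨M, hM, -⟩ := hfin.exists_le_mem_maxSet hx
  rw [← h.fmapA_diff_fmapB, hAB, Set.sdiff_self] at hM
  exact hM

lemma eq_lowerClosure_maxSet {J : Set P} (hJ : IsLowerSet J) (hfin : J.Finite) :
    J = lowerClosure (maxSet J) := by
  ext x
  rw [SetLike.mem_coe, mem_lowerClosure]
  exact ⟨fun hx => hfin.exists_le_mem_maxSet hx, fun ⟨M, hM, hxM⟩ => hJ hxM hM.1⟩

lemma eq_diff_upperClosure_of_forall_exists_le {I J T : Set P} (hI : IsLowerSet I)
    (hIJ : I ⊆ J) (hT : T ⊆ J \ I) (hcover : ∀ x ∈ J \ I, ∃ t ∈ T, t ≤ x) :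
    I = J \ upperClosure T := by
  ext x
  rw [Set.mem_sdiff, SetLike.mem_coe, mem_upperClosure]
  constructor
  · intro hxI
    exact ⟨hIJ hxI, fun ⟨t, ht, htx⟩ => (hT ht).2 (hI htx hxI)⟩
  · rintro ⟨hxJ, hx⟩
    by_contra hxI
    exact hx (hcover x ⟨hxJ, hxI⟩)

lemma OmegaP.eq_diff_upperClosure (h : OmegaP I J) (hfin : (J \ I).Finite) :
    I = J \ upperClosure ((FmapA I J \ FmapB I J) ∪ (FmapB I J \ FmapA I J)) := by
  refine eq_diff_upperClosure_of_forall_exists_le h.1 h.2.2.1.subset ?_ ?_ <;>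
    rw [h.fmapA_diff_fmapB, h.fmapB_diff_fmapA]
  · split_ifs
    · exact Set.union_subset maxSet_subset (Set.empty_subset _)
    · exact Set.union_subset maxSet_subset minSet_subset
  · intro x hx
    split_ifs with hD
    · obtain ⟨y, hy⟩ := Set.ncard_eq_one.mp hD
      rw [hy, Set.subsingleton_singleton.maxSet_eq]
      exact ⟨x, .inl (hy ▸ hx), le_rfl⟩
    · obtain ⟨m, hm, hmx⟩ := hfin.exists_mem_minSet_le hx
      exact ⟨m, .inr hm, hmx⟩

end Fmap

theorem stmt8 {P : Type*} [Fintype P] [PartialOrder P] :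
    (∀ I J : Set P, OmegaP I J → PsiP (FmapA I J) (FmapB I J)) ∧
    (∀ I J I' J' : Set P, OmegaP I J → OmegaP I' J' →
      FmapA I J = FmapA I' J' → FmapB I J = FmapB I' J' → I = I' ∧ J = J') := by
  refine ⟨fun I J h => h.psiP_fmap (Set.toFinite _), ?_⟩
  intro I J I' J' h h' hA hB
  have hJ : J = J' := by
    rw [eq_lowerClosure_maxSet h.2.1 J.toFinite, eq_lowerClosure_maxSet h'.2.1 J'.toFinite]
    exact congrArg (fun A => (lowerClosure A : Set P)) hA
  refine ⟨?_, hJ⟩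
  calc I = J \ upperClosure ((FmapA I J \ FmapB I J) ∪ (FmapB I J \ FmapA I J)) :=
        h.eq_diff_upperClosure (Set.toFinite _)
    _ = J' \ upperClosure ((FmapA I' J' \ FmapB I' J') ∪ (FmapB I' J' \ FmapA I' J')) := by
        rw [hA, hB, hJ]
    _ = I' := (h'.eq_diff_upperClosure (Set.toFinite _)).symm
end

section
/- Let P be a finite poset with (I,J) satisfying: I, J poset ideals, I ⊂ J, I ≠ J, and J \ I connected in P. With A = max(J) and B = min(J \ I) ∪ (max(I) ∩ max(J)) (where min(J \ I) := ∅ if |J \ I| = 1), one has A \ B = max(J \ I), B \ A = min(J \ I), and min(J \ I) ∩ (max(I) ∩ max(J)) = ∅. -/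
theorem stmt10 {P : Type*} [Fintype P] [PartialOrder P] (I J : Set P)
    (h : OmegaP I J) :
    let A : Set P := maxSet J
    let m : Set P := if (J \ I).ncard = 1 then ∅ else minSet (J \ I)
    let B : Set P := m ∪ (maxSet I ∩ maxSet J)
    A \ B = maxSet (J \ I) ∧ B \ A = m ∧ m ∩ (maxSet I ∩ maxSet J) = ∅ := by

  obtain ⟨hI, hJ, hIJ, hconn⟩ := h
  intro A m B
  have key : ∀ x ∈ minSet (J \ I), x ∈ maxSet (J \ I) → ∀ y ∈ J \ I, y = x := by
    intro x hmin hmax y hy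
    have hchain := hconn x hmin.1 y hy
    clear hy
    induction hchain with
    | refl => rfl
    | @tail b c h1 h2 ih =>
      obtain ⟨hb, hc, hcomp⟩ := h2
      rcases hcomp with hle | hle
      · exact (hmax.2 c hc (ih ▸ hle)).symm
      · exact (hmin.2 c hc (ih ▸ hle)).symm
  have keyn : ∀ x ∈ minSet (J \ I), x ∈ maxSet (J \ I) → (J \ I).ncard = 1 := by
    intro x hmin hmax
    have hsing : J \ I = {x} :=
      Set.eq_singleton_iff_unique_mem.mpr ⟨hmin.1, fun y hy => key x hmin hmax y hy⟩
    rw [hsing, Set.ncard_singleton]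
  have fact1 : maxSet (J \ I) ⊆ maxSet J := by
    intro x hx
    refine ⟨hx.1.1, fun y hy hxy => ?_⟩
    by_cases hyI : y ∈ I
    · exact absurd (hI hxy hyI) hx.1.2
    · exact hx.2 y ⟨hy, hyI⟩ hxy
  have fact4 : ∀ x ∈ maxSet J, x ∉ I → x ∈ maxSet (J \ I) := by
    intro x hx hxI
    exact ⟨⟨hx.1, hxI⟩, fun y hy hxy => hx.2 y hy.1 hxy⟩
  have hmnotmax : ∀ x ∈ m, x ∉ maxSet (J \ I) := by
    intro x hx hmax
    simp only [m] at hx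
    split at hx
    · exact hx.elim
    · next hne => exact hne (keyn x hx hmax)
  have hmsub : m ⊆ J \ I := by
    intro x hx
    simp only [m] at hx
    split at hx
    · exact hx.elim
    · exact hx.1
  refine ⟨?_, ?_, ?_⟩
  · ext x
    constructor
    · rintro ⟨hxA, hxB⟩
      by_cases hxI : x ∈ I
      · exact absurd (Or.inr ⟨⟨hxI, fun y hy hxy => hxA.2 y (hIJ.1 hy) hxy⟩, hxA⟩) hxB
      · exact fact4 x hxA hxI
    · intro hx
      refine ⟨fact1 hx, ?_⟩
      rintro (hxm | ⟨hxI, _⟩)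
      · exact hmnotmax x hxm hx
      · exact hx.1.2 hxI.1
  · ext x
    constructor
    · rintro ⟨hxB, hxA⟩
      rcases hxB with hxm | ⟨_, hxJ⟩
      · exact hxm
      · exact absurd hxJ hxA
    · intro hx
      refine ⟨Or.inl hx, fun hxA => ?_⟩
      exact hmnotmax x hx (fact4 x hxA (hmsub hx).2)
  · ext x
    simp only [Set.mem_inter_iff, Set.mem_empty_iff_false, iff_false]
    rintro ⟨hxm, hxI, _⟩
    exact (hmsub hxm).2 hxI.1
end

section
/- For any finite poset P with d elements, every vertex of the 1-skeleton of the order polytope O(P) has degree at least d. -/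
section Aux
variable {P : Type*} [PartialOrder P]

open Classical in
/-- The neighbor ideal associated to an element `p`. -/
noncomputable def nbrIdeal (I : Set P) (p : P) : Set P :=
  if p ∈ I then I \ {x | p ≤ x} else I ∪ {x | x ≤ p}

lemma nbrIdeal_lower {I : Set P} (hI : IsLowerSet I) (p : P) :
    IsLowerSet (nbrIdeal I p) := by
  unfold nbrIdeal
  split_ifs with hp
  · intro a b hba ha
    exact ⟨hI hba ha.1, fun hpb => ha.2 (le_trans hpb hba)⟩
  · exact hI.union (fun a b hba ha => le_trans hba ha)

lemma nbrIdeal_ne {I : Set P} (p : P) : nbrIdeal I p ≠ I := by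
  unfold nbrIdeal
  split_ifs with hp
  · intro h
    have : p ∈ I \ {x | p ≤ x} := by rw [h]; exact hp
    exact this.2 le_rfl
  · intro h
    exact hp (h ▸ Or.inr (le_refl p))

lemma connIn_of_through {S : Set P} {p : P} (hp : p ∈ S)
    (h : ∀ x ∈ S, p ≤ x ∨ x ≤ p) : ConnIn S := by
  intro x hx y hy
  have h1 : Relation.ReflTransGen (fun u v => u ∈ S ∧ v ∈ S ∧ (u ≤ v ∨ v ≤ u)) x p :=
    Relation.ReflTransGen.single ⟨hx, hp, (h x hx).symm⟩
  have h2 : Relation.ReflTransGen (fun u v => u ∈ S ∧ v ∈ S ∧ (u ≤ v ∨ v ≤ u)) p y :=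
    Relation.ReflTransGen.single ⟨hp, hy, h y hy⟩
  exact h1.trans h2

lemma nbrIdeal_adj {I : Set P} (hI : IsLowerSet I) (p : P) :
    (orderSkeleton P).Adj ⟨I, hI⟩ ⟨nbrIdeal I p, nbrIdeal_lower hI p⟩ := by
  have hne : (⟨I, hI⟩ : {I : Set P // IsLowerSet I}) ≠ ⟨nbrIdeal I p, nbrIdeal_lower hI p⟩ := by
    intro h
    exact nbrIdeal_ne p (congrArg Subtype.val h).symm
  refine ⟨hne, ?_⟩
  classical
  by_cases hp : p ∈ I
  · right
    refine ⟨?_, ?_⟩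
    · simp only [nbrIdeal, if_pos hp]
      exact ⟨Set.diff_subset, fun hsub => (hsub hp).2 le_rfl⟩
    · have heq : I \ nbrIdeal I p = {x | x ∈ I ∧ p ≤ x} := by
        simp only [nbrIdeal, if_pos hp]
        ext x
        simp only [Set.mem_diff, Set.mem_setOf_eq]
        tauto
      rw [heq]
      exact connIn_of_through ⟨hp, le_rfl⟩ (fun x hx => Or.inl hx.2)
  · left
    refine ⟨?_, ?_⟩
    · simp only [nbrIdeal, if_neg hp]
      exact ⟨Set.subset_union_left, fun hsub => hp (hsub (Or.inr le_rfl))⟩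
    · have heq : nbrIdeal I p \ I = {x | x ≤ p ∧ x ∉ I} := by
        simp only [nbrIdeal, if_neg hp]
        ext x
        simp only [Set.mem_diff, Set.mem_union, Set.mem_setOf_eq]
        tauto
      rw [heq]
      exact connIn_of_through ⟨le_rfl, hp⟩ (fun x hx => Or.inr hx.1)

lemma nbrIdeal_injective (I : Set P) : Function.Injective (nbrIdeal I) := by
  intro p q h
  unfold nbrIdeal at h
  by_cases hp : p ∈ I <;> by_cases hq : q ∈ I
  · rw [if_pos hp, if_pos hq] at h
    have h1 : q ∉ I \ {x | p ≤ x} := by rw [h]; exact fun hc => hc.2 le_rfl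
    have h2 : p ∉ I \ {x | q ≤ x} := by rw [← h]; exact fun hc => hc.2 le_rfl
    have hqp : q ≤ p := by by_contra hc; exact h2 ⟨hp, fun hle => hc hle⟩
    have hpq : p ≤ q := by by_contra hc; exact h1 ⟨hq, fun hle => hc hle⟩
    exact le_antisymm hpq hqp
  · rw [if_pos hp, if_neg hq] at h
    exfalso
    have : q ∈ I \ {x | p ≤ x} := h ▸ Or.inr le_rfl
    exact hq this.1
  · rw [if_neg hp, if_pos hq] at h
    exfalso
    have : p ∈ I \ {x | q ≤ x} := h ▸ Or.inr le_rfl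
    exact hp this.1
  · rw [if_neg hp, if_neg hq] at h
    have h1 : p ∈ I ∪ {x | x ≤ q} := h ▸ Or.inr le_rfl
    have h2 : q ∈ I ∪ {x | x ≤ p} := h ▸ Or.inr le_rfl
    exact le_antisymm (h1.resolve_left hp) (h2.resolve_left hq)

end Aux

theorem stmt12 {P : Type*} [Fintype P] [PartialOrder P]
    (v : {I : Set P // IsLowerSet I}) :
    Fintype.card P ≤ ((orderSkeleton P).neighborSet v).ncard := by
  obtain ⟨I, hI⟩ := v
  set g : P → {I : Set P // IsLowerSet I} :=
    fun p => ⟨nbrIdeal I p, nbrIdeal_lower hI p⟩ with hg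
  have hginj : Function.Injective g := by
    intro p q h
    exact nbrIdeal_injective I (congrArg Subtype.val h)
  have hsub : Set.range g ⊆ (orderSkeleton P).neighborSet ⟨I, hI⟩ := by
    rintro _ ⟨p, rfl⟩
    exact nbrIdeal_adj hI p
  calc Fintype.card P = (Set.range g).ncard := by
        rw [← Nat.card_coe_set_eq, Nat.card_range_of_injective hginj,
          Nat.card_eq_fintype_card]
    _ ≤ ((orderSkeleton P).neighborSet ⟨I, hI⟩).ncard :=
        Set.ncard_le_ncard hsub (Set.toFinite _)
end

section
/- Let P be a finite poset with d elements containing the 5-element poset X = {a, b, c, g, h} with relations a < c, b < c, c < g, c < h as a subposet. Then every vertex of the 1-skeleton of the order polytope O(P) has degree at least d + 1. -/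
/-!
The ideal `I` has the `d` neighbours `toggle I p`: remove the part of `I` above `p` if
`p ∈ I`, add the part of the complement below `p` otherwise. They are pairwise distinct,
since `p` is the least element of what was removed, or the greatest element of what was
added. The subposet `X` supplies one more neighbour: if `c ∈ I`, remove everything in `I`
above `a` or `b`; otherwise add everything outside `I` below `g` or `h`. The change is
connected through `c` but, as `a, b` (resp. `g, h`) are incomparable, it has no least
(resp. greatest) element, so this neighbour is not a toggle.
-/

open Set

lemma Set.add_one_le_ncard_of_injective {α β : Type*} [Fintype α] {s : Set β} (hs : s.Finite)
    {f : α → β} (hf : Function.Injective f) (hfs : ∀ x, f x ∈ s) {w : β} (hw : w ∈ s)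
    (hwf : ∀ x, f x ≠ w) : Fintype.card α + 1 ≤ s.ncard := by
  have hw' : w ∉ range f := by rintro ⟨x, hx⟩; exact hwf x hx
  calc Fintype.card α + 1 = (insert w (range f)).ncard := by
        rw [ncard_insert_of_notMem hw' (toFinite _), ncard_range_of_injective hf,
          Nat.card_eq_fintype_card]
    _ ≤ s.ncard := ncard_le_ncard (insert_subset hw (range_subset_iff.2 hfs)) hs

section OrderSkeleton

variable {P : Type*} [PartialOrder P] {I J : Set P} {p : P}

lemma connIn_of_hub {S : Set P} {m : P} (hm : m ∈ S)
    (H : ∀ x ∈ S, ∃ y ∈ S, (x ≤ y ∨ y ≤ x) ∧ (y ≤ m ∨ m ≤ y)) : ConnIn S := by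
  intro x hx z hz
  obtain ⟨y, hy, hxy, hym⟩ := H x hx
  obtain ⟨y', hy', hzy', hy'm⟩ := H z hz
  exact .head ⟨hx, hy, hxy⟩ <| .head ⟨hy, hm, hym⟩ <|
    .head ⟨hm, hy', hy'm.symm⟩ <| .single ⟨hy', hz, hzy'.symm⟩

lemma IsLeast.connIn {S : Set P} (h : IsLeast S p) : ConnIn S :=
  connIn_of_hub h.1 fun x hx => ⟨x, hx, .inl le_rfl, .inr (h.2 hx)⟩

lemma IsGreatest.connIn {S : Set P} (h : IsGreatest S p) : ConnIn S :=
  connIn_of_hub h.1 fun x hx => ⟨x, hx, .inl le_rfl, .inl (h.2 hx)⟩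

lemma orderSkeleton_adj_of_ssubset (hI : IsLowerSet I) (hJ : IsLowerSet J) (hIJ : I ⊂ J)
    (hconn : ConnIn (J \ I)) : (orderSkeleton P).Adj ⟨I, hI⟩ ⟨J, hJ⟩ := by
  rw [orderSkeleton, SimpleGraph.fromRel_adj]
  exact ⟨fun h => hIJ.ne (congrArg Subtype.val h), .inl ⟨hIJ, hconn⟩⟩

noncomputable def toggle (I : Set P) (p : P) : Set P :=
  open Classical in if p ∈ I then I \ Ici p else I ∪ Iic p

lemma toggle_of_mem (hp : p ∈ I) : toggle I p = I \ Ici p := if_pos hp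

lemma toggle_of_notMem (hp : p ∉ I) : toggle I p = I ∪ Iic p := if_neg hp

lemma IsLowerSet.toggle (hI : IsLowerSet I) (p : P) : IsLowerSet (toggle I p) := by
  by_cases hp : p ∈ I
  · rw [toggle_of_mem hp]; exact hI.sdiff_of_isUpperSet (isUpperSet_Ici p)
  · rw [toggle_of_notMem hp]; exact hI.union (isLowerSet_Iic p)

lemma toggle_subset (hp : p ∈ I) : toggle I p ⊆ I := by
  rw [toggle_of_mem hp]; exact sdiff_subset

lemma self_mem_toggle (hp : p ∉ I) : p ∈ toggle I p := by
  rw [toggle_of_notMem hp]; exact .inr le_rfl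

lemma isLeast_diff_toggle (hp : p ∈ I) : IsLeast (I \ toggle I p) p := by
  rw [toggle_of_mem hp, sdiff_sdiff_right_self]
  exact ⟨⟨hp, le_rfl⟩, fun _ hq => hq.2⟩

lemma isGreatest_toggle_diff (hp : p ∉ I) : IsGreatest (toggle I p \ I) p := by
  rw [toggle_of_notMem hp, union_sdiff_left]
  exact ⟨⟨le_rfl, hp⟩, fun _ hq => hq.1⟩

lemma orderSkeleton_adj_toggle (hI : IsLowerSet I) (p : P) :
    (orderSkeleton P).Adj ⟨I, hI⟩ ⟨toggle I p, hI.toggle p⟩ := by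
  by_cases hp : p ∈ I
  · have hlt : toggle I p ⊂ I :=
      (ssubset_iff_of_subset (toggle_subset hp)).2 ⟨p, (isLeast_diff_toggle hp).1⟩
    exact (orderSkeleton_adj_of_ssubset _ _ hlt (isLeast_diff_toggle hp).connIn).symm
  · have hlt : I ⊂ toggle I p :=
      (ssubset_iff_of_subset (by rw [toggle_of_notMem hp]; exact subset_union_left)).2
        ⟨p, (isGreatest_toggle_diff hp).1⟩
    exact orderSkeleton_adj_of_ssubset _ _ hlt (isGreatest_toggle_diff hp).connIn

lemma toggle_injective (I : Set P) : Function.Injective (toggle I) := by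
  intro p q hpq
  by_cases hp : p ∈ I <;> by_cases hq : q ∈ I
  · exact (isLeast_diff_toggle hp).unique (hpq ▸ isLeast_diff_toggle hq)
  · exact absurd (toggle_subset hp (hpq ▸ self_mem_toggle hq)) hq
  · exact absurd (toggle_subset hq (hpq ▸ self_mem_toggle hp)) hp
  · exact (isGreatest_toggle_diff hp).unique (hpq ▸ isGreatest_toggle_diff hq)

lemma ne_toggle_of_subset (hJI : J ⊆ I) (hJ : ∀ p, ¬ IsLeast (I \ J) p) (p : P) :
    J ≠ toggle I p := by
  rintro rfl
  by_cases hp : p ∈ I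
  · exact hJ p (isLeast_diff_toggle hp)
  · exact hp (hJI (self_mem_toggle hp))

lemma ne_toggle_of_superset (hIJ : I ⊆ J) (hJ : ∀ p, ¬ IsGreatest (J \ I) p) (p : P) :
    J ≠ toggle I p := by
  rintro rfl
  by_cases hp : p ∈ I
  · exact (isLeast_diff_toggle hp).1.2 (hIJ hp)
  · exact hJ p (isGreatest_toggle_diff hp)

lemma exists_adj_ne_toggle_of_mem {a b c : P} (hI : IsLowerSet I) (hac : a ≤ c) (hbc : b ≤ c)
    (hab : ¬ a ≤ b) (hba : ¬ b ≤ a) (hc : c ∈ I) :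
    ∃ J : {J : Set P // IsLowerSet J},
      (orderSkeleton P).Adj ⟨I, hI⟩ J ∧ ∀ p, J.1 ≠ toggle I p := by
  have hJ : IsLowerSet (I \ (Ici a ∪ Ici b)) :=
    hI.sdiff_of_isUpperSet ((isUpperSet_Ici a).union (isUpperSet_Ici b))
  have hdiff : I \ (I \ (Ici a ∪ Ici b)) = I ∩ (Ici a ∪ Ici b) := sdiff_sdiff_right_self _ _
  have ha : a ∈ I ∩ (Ici a ∪ Ici b) := ⟨hI hac hc, .inl le_rfl⟩
  have hb : b ∈ I ∩ (Ici a ∪ Ici b) := ⟨hI hbc hc, .inr le_rfl⟩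
  refine ⟨⟨_, hJ⟩, .symm (orderSkeleton_adj_of_ssubset _ _ ?_ ?_), ne_toggle_of_subset
    sdiff_subset ?_⟩
  · exact (ssubset_iff_of_subset sdiff_subset).2 ⟨a, ha.1, fun h => h.2 (.inl le_rfl)⟩
  · rw [hdiff]
    refine connIn_of_hub (m := c) ⟨hc, .inl hac⟩ fun x hx => ?_
    rcases hx.2 with hax | hbx
    · exact ⟨a, ha, .inr hax, .inl hac⟩
    · exact ⟨b, hb, .inr hbx, .inl hbc⟩
  · rintro p ⟨hp, hleast⟩
    rw [hdiff] at hp hleast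
    rcases hp.2 with hap | hbp
    · exact hab (hap.trans (hleast hb))
    · exact hba (hbp.trans (hleast ha))

lemma exists_adj_ne_toggle_of_notMem {c g h : P} (hI : IsLowerSet I) (hcg : c ≤ g)
    (hch : c ≤ h) (hgh : ¬ g ≤ h) (hhg : ¬ h ≤ g) (hc : c ∉ I) :
    ∃ J : {J : Set P // IsLowerSet J},
      (orderSkeleton P).Adj ⟨I, hI⟩ J ∧ ∀ p, J.1 ≠ toggle I p := by
  have hJ : IsLowerSet (I ∪ (Iic g ∪ Iic h)) :=
    hI.union ((isLowerSet_Iic g).union (isLowerSet_Iic h))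
  have hdiff : (I ∪ (Iic g ∪ Iic h)) \ I = (Iic g ∪ Iic h) \ I := union_sdiff_left
  have hg : g ∈ (Iic g ∪ Iic h) \ I := ⟨.inl le_rfl, fun hg => hc (hI hcg hg)⟩
  have hh : h ∈ (Iic g ∪ Iic h) \ I := ⟨.inr le_rfl, fun hh => hc (hI hch hh)⟩
  refine ⟨⟨_, hJ⟩, orderSkeleton_adj_of_ssubset _ _ ?_ ?_, ne_toggle_of_superset
    subset_union_left ?_⟩
  · exact (ssubset_iff_of_subset subset_union_left).2 ⟨g, .inr hg.1, hg.2⟩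
  · rw [hdiff]
    refine connIn_of_hub (m := c) ⟨.inl hcg, hc⟩ fun x hx => ?_
    rcases hx.1 with hxg | hxh
    · exact ⟨g, hg, .inl hxg, .inr hcg⟩
    · exact ⟨h, hh, .inl hxh, .inr hch⟩
  · rintro p ⟨hp, hgreatest⟩
    rw [hdiff] at hp hgreatest
    rcases hp.1 with hpg | hph
    · exact hhg ((hgreatest hh).trans hpg)
    · exact hgh ((hgreatest hg).trans hph)

end OrderSkeleton

theorem stmt14 {P : Type*} [Fintype P] [PartialOrder P] (hX : ContainsX P)
    (v : {I : Set P // IsLowerSet I}) :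
    Fintype.card P + 1 ≤ ((orderSkeleton P).neighborSet v).ncard := by
  obtain ⟨a, b, c, g, h, hac, hbc, hcg, hch, hab, hba, hgh, hhg⟩ := hX
  obtain ⟨I, hI⟩ := v
  obtain ⟨J, hJ, hJ_ne⟩ : ∃ J : {J : Set P // IsLowerSet J},
      (orderSkeleton P).Adj ⟨I, hI⟩ J ∧ ∀ p, J.1 ≠ toggle I p := by
    by_cases hc : c ∈ I
    · exact exists_adj_ne_toggle_of_mem hI hac.le hbc.le hab hba hc
    · exact exists_adj_ne_toggle_of_notMem hI hcg.le hch.le hgh hhg hc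
  refine Set.add_one_le_ncard_of_injective (toFinite _)
    (f := fun p => ⟨toggle I p, hI.toggle p⟩) ?_ (orderSkeleton_adj_toggle hI) hJ
    fun p hp => hJ_ne p (congrArg Subtype.val hp).symm
  exact fun p q hpq => toggle_injective I (congrArg Subtype.val hpq)
end

section
/- Let P be a finite poset and suppose the poset X (five elements a,b,c,g,h with a<c, b<c, c<g, c<h) does not appear as a subposet of P. Then the degree sequence of the 1-skeleton of O(P) equals that of the 1-skeleton of C(P). -/
/-!
Let `D` be the set of elements whose strict down-set is a chain. It is a down-set, and when `P`
avoids `X` every element outside `D` has a chain as its strict up-set. The map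
`φ : I ↦ (min (P \ I) ∩ D) ∪ (max I \ D)` is a bijection from ideals to antichains, and it is an
isomorphism of the two skeletons: two ideals with connected symmetric difference are nested, so
on both sides adjacency means connected symmetric difference. Push each element of `D` down and
every other element up. Comparable elements have comparable pushes (this is where `X`-freeness
enters), and every element of `I ∆ J` pushes into `φ I ∆ φ J` and vice versa, so connectedness
is carried across in both directions.
-/

open scoped symmDiff

section

variable {P : Type*} [PartialOrder P]

variable (P) in
def chainBelow : Set P := {x | IsChain (· ≤ ·) (Set.Iio x)}

theorem isLowerSet_chainBelow : IsLowerSet (chainBelow P) :=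
  fun _ _ hyx hx => hx.mono (Set.Iio_subset_Iio hyx)

theorem isChain_Ioi_of_notMem_chainBelow (hX : ¬ ContainsX P) {x : P}
    (hx : x ∉ chainBelow P) : IsChain (· ≤ ·) (Set.Ioi x) := by
  intro g hg h hh _
  by_contra hinc
  have hx : ¬ IsChain (· ≤ ·) (Set.Iio x) := hx
  simp only [IsChain, Set.Pairwise] at hx
  push Not at hx hinc
  obtain ⟨a, ha, b, hb, -, hab, hba⟩ := hx
  exact hX ⟨a, b, x, g, h, ha, hb, hg, hh, hab, hba, hinc.1, hinc.2⟩

theorem comparable_of_le_of_mem_chainBelow {c x y : P} (hc : c ∈ chainBelow P)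
    (hx : x ≤ c) (hy : y ≤ c) : x ≤ y ∨ y ≤ x := by
  have hIic : IsChain (· ≤ ·) (insert c (Set.Iio c)) := hc.insert fun _ hb _ => .inr hb.le
  rw [Set.Iio_insert] at hIic
  exact hIic.total hx hy

theorem comparable_of_ge_of_notMem_chainBelow (hX : ¬ ContainsX P) {c x y : P}
    (hc : c ∉ chainBelow P) (hx : c ≤ x) (hy : c ≤ y) : x ≤ y ∨ y ≤ x := by
  have hIci : IsChain (· ≤ ·) (insert c (Set.Ioi c)) :=
    (isChain_Ioi_of_notMem_chainBelow hX hc).insert fun _ hb _ => .inl hb.le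
  rw [Set.Ioi_insert] at hIci
  exact hIci.total hx hy

def IsPush (t s : P) : Prop :=
  (t ∈ chainBelow P ∧ s ≤ t) ∨ (t ∉ chainBelow P ∧ t ≤ s)

theorem IsPush.comparable {t s : P} (h : IsPush t s) : t ≤ s ∨ s ≤ t :=
  h.elim (fun h => .inr h.2) (fun h => .inl h.2)

theorem IsPush.comparable_of_le (hX : ¬ ContainsX P) {b c m m' : P} (hbc : b ≤ c)
    (hm : IsPush b m) (hm' : IsPush c m') : m ≤ m' ∨ m' ≤ m := by
  rcases hm with ⟨-, hmb⟩ | ⟨hb, hbm⟩ <;> rcases hm' with ⟨hc, hm'c⟩ | ⟨hc, hcm'⟩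
  · exact comparable_of_le_of_mem_chainBelow hc (hmb.trans hbc) hm'c
  · exact .inl ((hmb.trans hbc).trans hcm')
  · exact absurd (isLowerSet_chainBelow hbc hc) hb
  · exact comparable_of_ge_of_notMem_chainBelow hX hb hbm (hbc.trans hcm')

theorem ConnIn.of_isPush (hX : ¬ ContainsX P) {S T : Set P} (hS : ConnIn S)
    (himg : ∀ t ∈ S, ∃ s ∈ T, IsPush t s)
    (hanchor : ∀ z ∈ T, ∃ u ∈ S, u ∈ T ∧ (z ≤ u ∨ u ≤ z)) : ConnIn T := by
  have push_path : ∀ {t t' : P},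
      Relation.ReflTransGen (fun u v => u ∈ S ∧ v ∈ S ∧ (u ≤ v ∨ v ≤ u)) t t' →
      ∀ {s s' : P}, s ∈ T → IsPush t s → s' ∈ T → IsPush t' s' →
      Relation.ReflTransGen (fun u v => u ∈ T ∧ v ∈ T ∧ (u ≤ v ∨ v ≤ u)) s s' := by
    intro t t' hpath
    induction hpath with
    | refl => exact fun hs hts hs' hts' => .single ⟨hs, hs', hts.comparable_of_le hX le_rfl hts'⟩
    | tail _ hbc ih =>
      intro s s' hs hts hs' hcs'
      obtain ⟨sb, hsb, hbsb⟩ := himg _ hbc.1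
      refine (ih hs hts hsb hbsb).tail ⟨hsb, hs', ?_⟩
      rcases hbc.2.2 with hle | hle
      · exact hbsb.comparable_of_le hX hle hcs'
      · exact (hcs'.comparable_of_le hX hle hbsb).symm
  intro z hz z' hz'
  obtain ⟨u, huS, huT, hzu⟩ := hanchor z hz
  obtain ⟨u', hu'S, hu'T, hzu'⟩ := hanchor z' hz'
  obtain ⟨s, hs, hus⟩ := himg u huS
  obtain ⟨s', hs', hus'⟩ := himg u' hu'S
  exact (Relation.ReflTransGen.single ⟨hz, huT, hzu⟩).trans <|
    (Relation.ReflTransGen.single ⟨huT, hs, hus.comparable⟩).trans <|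
    (push_path (hS u huS u' hu'S) hs hus hs' hus').trans <|
    (Relation.ReflTransGen.single ⟨hs', hu'T, hus'.comparable.symm⟩).trans
    (.single ⟨hu'T, hz', hzu'.symm⟩)

theorem IsLowerSet.subset_or_subset_of_connIn_symmDiff {I J : Set P} (hI : IsLowerSet I)
    (hJ : IsLowerSet J) (h : ConnIn (I ∆ J)) : I ⊆ J ∨ J ⊆ I := by
  by_contra hcon
  push Not at hcon
  obtain ⟨⟨x, hxI, hxJ⟩, ⟨y, hyJ, hyI⟩⟩ := And.imp Set.not_subset.1 Set.not_subset.1 hcon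
  have stays : ∀ z, Relation.ReflTransGen
      (fun u v => u ∈ I ∆ J ∧ v ∈ I ∆ J ∧ (u ≤ v ∨ v ≤ u)) x z → z ∈ I \ J := by
    intro z hz
    induction hz with
    | refl => exact ⟨hxI, hxJ⟩
    | tail _ hstep ih =>
      obtain ⟨-, hc | hc, hle | hle⟩ := hstep
      · exact hc
      · exact hc
      · exact absurd (hJ hle hc.1) ih.2
      · exact absurd (hI hle ih.1) hc.2
  exact (stays y (h x (.inl ⟨hxI, hxJ⟩) y (.inr ⟨hyJ, hyI⟩))).2 hyJ

def idealToAntichain (I : Set P) : Set P :=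
  {x | Minimal (· ∉ I) x ∧ x ∈ chainBelow P} ∪ {x | Maximal (· ∈ I) x ∧ x ∉ chainBelow P}

def antichainToIdeal (A : Set P) : Set P :=
  lowerClosure (A \ chainBelow P) ∪ (chainBelow P \ upperClosure (A ∩ chainBelow P))

theorem mem_idealToAntichain_of_mem_chainBelow {I : Set P} {x : P} (hx : x ∈ chainBelow P) :
    x ∈ idealToAntichain I ↔ Minimal (· ∉ I) x := by
  simp [idealToAntichain, hx]

theorem mem_idealToAntichain_of_notMem_chainBelow {I : Set P} {x : P}
    (hx : x ∉ chainBelow P) : x ∈ idealToAntichain I ↔ Maximal (· ∈ I) x := by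
  simp [idealToAntichain, hx]

theorem mem_antichainToIdeal_of_mem_chainBelow {A : Set P} (hA : IsAntichain (· ≤ ·) A) {x : P}
    (hx : x ∈ chainBelow P) :
    x ∈ antichainToIdeal A ↔ ∀ a ∈ A, a ∈ chainBelow P → ¬ a ≤ x := by
  simp only [antichainToIdeal, Set.mem_union, SetLike.mem_coe, mem_lowerClosure,
    mem_upperClosure, Set.mem_sdiff, Set.mem_inter_iff, hx, true_and, not_exists, not_and, and_imp]
  refine ⟨?_, .inr⟩
  rintro (⟨b, ⟨hbA, hbD⟩, hxb⟩ | h)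
  · intro a haA haD hax
    exact hbD (hA.eq haA hbA (hax.trans hxb) ▸ haD)
  · exact h

theorem mem_antichainToIdeal_of_notMem_chainBelow {A : Set P} {x : P}
    (hx : x ∉ chainBelow P) :
    x ∈ antichainToIdeal A ↔ ∃ a ∈ A, a ∉ chainBelow P ∧ x ≤ a := by
  simp [antichainToIdeal, mem_lowerClosure, hx, and_assoc]

theorem isAntichain_idealToAntichain {I : Set P} (hI : IsLowerSet I) :
    IsAntichain (· ≤ ·) (idealToAntichain I) := by
  rintro u (⟨hu, -⟩ | ⟨hu, huD⟩) v (⟨hv, hvD⟩ | ⟨hv, -⟩) huv hle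
  · exact huv (hv.eq_of_le hu.1 hle)
  · exact hu.1 (hI hle hv.1)
  · exact huD (isLowerSet_chainBelow hle hvD)
  · exact huv (hu.eq_of_le hv.1 hle)

theorem isLowerSet_antichainToIdeal (A : Set P) : IsLowerSet (antichainToIdeal A) :=
  (lowerClosure _).lower.union (isLowerSet_chainBelow.inter (upperClosure _).upper.compl)

theorem idealToAntichain_antichainToIdeal {A : Set P} (hA : IsAntichain (· ≤ ·) A) :
    idealToAntichain (antichainToIdeal A) = A := by
  ext x
  by_cases hxD : x ∈ chainBelow P
  · rw [mem_idealToAntichain_of_mem_chainBelow hxD]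
    have notMem : ∀ {a}, a ∈ A → a ∈ chainBelow P → a ∉ antichainToIdeal A := fun haA haD h =>
      (mem_antichainToIdeal_of_mem_chainBelow hA haD).1 h _ haA haD le_rfl
    constructor
    · intro hmin
      have hx : x ∉ antichainToIdeal A := hmin.1
      rw [mem_antichainToIdeal_of_mem_chainBelow hA hxD] at hx
      push Not at hx
      obtain ⟨a, haA, haD, hax⟩ := hx
      exact hmin.eq_of_le (notMem haA haD) hax ▸ haA
    · refine fun hxA => ⟨notMem hxA hxD, fun y (hy : y ∉ antichainToIdeal A) hyx => ?_⟩
      have hyD := isLowerSet_chainBelow hyx hxD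
      rw [mem_antichainToIdeal_of_mem_chainBelow hA hyD] at hy
      push Not at hy
      obtain ⟨b, hbA, -, hby⟩ := hy
      exact hA.eq hbA hxA (hby.trans hyx) ▸ hby
  · rw [mem_idealToAntichain_of_notMem_chainBelow hxD]
    have mem : ∀ {a}, a ∈ A → a ∉ chainBelow P → a ∈ antichainToIdeal A := fun haA haD =>
      (mem_antichainToIdeal_of_notMem_chainBelow haD).2 ⟨_, haA, haD, le_rfl⟩
    constructor
    · intro hmax
      obtain ⟨a, haA, haD, hxa⟩ := (mem_antichainToIdeal_of_notMem_chainBelow hxD).1 hmax.1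
      exact (hmax.eq_of_le (mem haA haD) hxa).symm ▸ haA
    · refine fun hxA => ⟨mem hxA hxD, fun y hy hxy => ?_⟩
      have hyD : y ∉ chainBelow P := fun h => hxD (isLowerSet_chainBelow hxy h)
      obtain ⟨b, hbA, -, hyb⟩ := (mem_antichainToIdeal_of_notMem_chainBelow hyD).1 hy
      exact (hA.eq hxA hbA (hxy.trans hyb)).symm ▸ hyb

theorem antichainToIdeal_idealToAntichain [Finite P] {I : Set P} (hI : IsLowerSet I) :
    antichainToIdeal (idealToAntichain I) = I := by
  ext x
  by_cases hxD : x ∈ chainBelow P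
  · rw [mem_antichainToIdeal_of_mem_chainBelow (isAntichain_idealToAntichain hI) hxD]
    constructor
    · intro h
      by_contra hxI
      obtain ⟨m, hmx, hmin⟩ := Iᶜ.toFinite.exists_le_minimal hxI
      have hmD := isLowerSet_chainBelow hmx hxD
      exact h m ((mem_idealToAntichain_of_mem_chainBelow hmD).2 hmin) hmD hmx
    · intro hxI a ha haD hax
      exact ((mem_idealToAntichain_of_mem_chainBelow haD).1 ha).1 (hI hax hxI)
  · rw [mem_antichainToIdeal_of_notMem_chainBelow hxD]
    constructor
    · rintro ⟨a, ha, haD, hxa⟩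
      exact hI hxa ((mem_idealToAntichain_of_notMem_chainBelow haD).1 ha).1
    · intro hxI
      obtain ⟨m, hxm, hmax⟩ := I.toFinite.exists_le_maximal hxI
      have hmD : m ∉ chainBelow P := fun h => hxD (isLowerSet_chainBelow hxm h)
      exact ⟨m, (mem_idealToAntichain_of_notMem_chainBelow hmD).2 hmax, hmD, hxm⟩

theorem exists_isPush_mem_diff_mem_symmDiff_idealToAntichain [Finite P] {I J : Set P}
    (hI : IsLowerSet I) (hJ : IsLowerSet J) {s : P} (hs : s ∈ J \ I) :
    ∃ m ∈ J \ I, m ∈ idealToAntichain I ∆ idealToAntichain J ∧ IsPush s m := by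
  by_cases hsD : s ∈ chainBelow P
  · obtain ⟨m, hms, hmin⟩ := Iᶜ.toFinite.exists_le_minimal hs.2
    have hmD := isLowerSet_chainBelow hms hsD
    have hmJ : m ∈ J := hJ hms hs.1
    refine ⟨m, ⟨hmJ, hmin.1⟩, .inl ⟨(mem_idealToAntichain_of_mem_chainBelow hmD).2 hmin, ?_⟩,
      .inl ⟨hsD, hms⟩⟩
    rw [mem_idealToAntichain_of_mem_chainBelow hmD]
    exact fun h => h.1 hmJ
  · obtain ⟨m, hsm, hmax⟩ := J.toFinite.exists_le_maximal hs.1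
    have hmD : m ∉ chainBelow P := fun h => hsD (isLowerSet_chainBelow hsm h)
    have hmI : m ∉ I := fun h => hs.2 (hI hsm h)
    refine ⟨m, ⟨hmax.1, hmI⟩, .inr ⟨(mem_idealToAntichain_of_notMem_chainBelow hmD).2 hmax, ?_⟩,
      .inr ⟨hsD, hsm⟩⟩
    rw [mem_idealToAntichain_of_notMem_chainBelow hmD]
    exact fun h => hmI h.1

theorem exists_isPush_mem_symmDiff_of_mem_idealToAntichain {I J : Set P} {t : P}
    (htI : t ∈ idealToAntichain I) (htJ : t ∉ idealToAntichain J) :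
    ∃ s ∈ I ∆ J, IsPush t s := by
  by_cases htD : t ∈ chainBelow P
  · rw [mem_idealToAntichain_of_mem_chainBelow htD] at htI htJ
    by_cases htJ' : t ∈ J
    · exact ⟨t, .inr ⟨htJ', htI.1⟩, .inl ⟨htD, le_rfl⟩⟩
    · obtain ⟨y, hyJ, hyt, hty⟩ : ∃ y, y ∉ J ∧ y ≤ t ∧ ¬ t ≤ y := by
        simpa [Minimal, htJ'] using htJ
      have hyI : y ∈ I := by_contra fun hyI => hty (htI.2 hyI hyt)
      exact ⟨y, .inl ⟨hyI, hyJ⟩, .inl ⟨htD, hyt⟩⟩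
  · rw [mem_idealToAntichain_of_notMem_chainBelow htD] at htI htJ
    by_cases htJ' : t ∈ J
    · obtain ⟨y, hyJ, hty, hyt⟩ : ∃ y, y ∈ J ∧ t ≤ y ∧ ¬ y ≤ t := by
        simpa [Maximal, htJ'] using htJ
      have hyI : y ∉ I := fun hyI => hyt (htI.2 hyI hty)
      exact ⟨y, .inr ⟨hyJ, hyI⟩, .inr ⟨htD, hty⟩⟩
    · exact ⟨t, .inl ⟨htI.1, htJ'⟩, .inr ⟨htD, le_rfl⟩⟩

theorem IsPush.trans {t s m : P} (hts : IsPush t s) (hsm : IsPush s m) : IsPush t m := by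
  rcases hts with ⟨htD, hst⟩ | ⟨htD, hts⟩
  · obtain ⟨-, hms⟩ | ⟨hsD, -⟩ := hsm
    · exact .inl ⟨htD, hms.trans hst⟩
    · exact absurd (isLowerSet_chainBelow hst htD) hsD
  · obtain ⟨hsD, -⟩ | ⟨-, hsm⟩ := hsm
    · exact absurd (isLowerSet_chainBelow hts hsD) htD
    · exact .inr ⟨htD, hts.trans hsm⟩

theorem exists_isPush_mem_symmDiff_idealToAntichain_of_mem_symmDiff [Finite P] {I J : Set P}
    (hI : IsLowerSet I) (hJ : IsLowerSet J) {s : P} (hs : s ∈ I ∆ J) :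
    ∃ m ∈ I ∆ J, m ∈ idealToAntichain I ∆ idealToAntichain J ∧ IsPush s m := by
  rcases hs with hs | hs
  · obtain ⟨m, hm, hmT, hsm⟩ := exists_isPush_mem_diff_mem_symmDiff_idealToAntichain hJ hI hs
    exact ⟨m, .inl hm, symmDiff_comm (idealToAntichain J) _ ▸ hmT, hsm⟩
  · obtain ⟨m, hm, hmT, hsm⟩ := exists_isPush_mem_diff_mem_symmDiff_idealToAntichain hI hJ hs
    exact ⟨m, .inr hm, hmT, hsm⟩

theorem exists_isPush_mem_symmDiff_of_mem_symmDiff_idealToAntichain {I J : Set P} {t : P}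
    (ht : t ∈ idealToAntichain I ∆ idealToAntichain J) : ∃ s ∈ I ∆ J, IsPush t s := by
  rcases ht with ⟨htI, htJ⟩ | ⟨htJ, htI⟩
  · exact exists_isPush_mem_symmDiff_of_mem_idealToAntichain htI htJ
  · obtain ⟨s, hs, hts⟩ := exists_isPush_mem_symmDiff_of_mem_idealToAntichain htJ htI
    exact ⟨s, symmDiff_comm J I ▸ hs, hts⟩

theorem connIn_symmDiff_idealToAntichain_iff [Finite P] (hX : ¬ ContainsX P) {I J : Set P}
    (hI : IsLowerSet I) (hJ : IsLowerSet J) :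
    ConnIn (idealToAntichain I ∆ idealToAntichain J) ↔ ConnIn (I ∆ J) := by
  have push_in := fun {s : P} (hs : s ∈ I ∆ J) =>
    exists_isPush_mem_symmDiff_idealToAntichain_of_mem_symmDiff hI hJ hs
  constructor
  · refine fun h => h.of_isPush hX
      (fun _ ht => exists_isPush_mem_symmDiff_of_mem_symmDiff_idealToAntichain ht) ?_
    intro z hz
    obtain ⟨m, hm, hmT, hzm⟩ := push_in hz
    exact ⟨m, hmT, hm, hzm.comparable⟩
  · refine fun h => h.of_isPush hX (fun _ hs => ?_) (fun _ ht => ?_)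
    · obtain ⟨m, -, hmT, hsm⟩ := push_in hs
      exact ⟨m, hmT, hsm⟩
    · obtain ⟨s, hs, hts⟩ := exists_isPush_mem_symmDiff_of_mem_symmDiff_idealToAntichain ht
      obtain ⟨m, hm, hmT, hsm⟩ := push_in hs
      exact ⟨m, hm, hmT, (hts.trans hsm).comparable⟩

theorem orderSkeleton_adj {I J : {I : Set P // IsLowerSet I}} :
    (orderSkeleton P).Adj I J ↔ I ≠ J ∧ ConnIn (I.1 ∆ J.1) := by
  rw [orderSkeleton, SimpleGraph.fromRel_adj]
  refine and_congr_right fun hne => ⟨?_, fun h => ?_⟩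
  · rintro (⟨hIJ, h⟩ | ⟨hJI, h⟩)
    · rwa [symmDiff_of_le hIJ.le]
    · rwa [symmDiff_of_ge hJI.le]
  · have hne' : I.1 ≠ J.1 := Subtype.coe_ne_coe.2 hne
    rcases I.2.subset_or_subset_of_connIn_symmDiff J.2 h with hIJ | hJI
    · exact .inl ⟨hIJ.ssubset_of_ne hne', by rwa [symmDiff_of_le hIJ] at h⟩
    · exact .inr ⟨hJI.ssubset_of_ne hne'.symm, by rwa [symmDiff_of_ge hJI] at h⟩

theorem chainSkeleton_adj {A B : {A : Set P // IsAntichain (· ≤ ·) A}} :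
    (chainSkeleton P).Adj A B ↔ A ≠ B ∧ ConnIn (A.1 ∆ B.1) := by
  rw [chainSkeleton, SimpleGraph.fromRel_adj]
  refine and_congr_right fun _ => ⟨fun h => h.elim id fun h => ?_, .inl⟩
  rwa [symmDiff_comm]

variable (P) in
def idealEquivAntichain [Finite P] :
    {I : Set P // IsLowerSet I} ≃ {A : Set P // IsAntichain (· ≤ ·) A} where
  toFun I := ⟨idealToAntichain I.1, isAntichain_idealToAntichain I.2⟩
  invFun A := ⟨antichainToIdeal A.1, isLowerSet_antichainToIdeal A.1⟩
  left_inv I := Subtype.ext (antichainToIdeal_idealToAntichain I.2)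
  right_inv A := Subtype.ext (idealToAntichain_antichainToIdeal A.2)

def orderSkeletonIsoChainSkeleton [Finite P] (hX : ¬ ContainsX P) :
    orderSkeleton P ≃g chainSkeleton P where
  toEquiv := idealEquivAntichain P
  map_rel_iff' {I J} := by
    rw [chainSkeleton_adj, orderSkeleton_adj, (idealEquivAntichain P).injective.ne_iff]
    exact and_congr_right fun _ => connIn_symmDiff_idealToAntichain_iff hX I.2 J.2

end

theorem degMultiset_eq_of_iso {V W : Type*} [Fintype V] [Fintype W] {G : SimpleGraph V}
    {H : SimpleGraph W} (e : G ≃g H) : degMultiset G = degMultiset H := by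
  rw [degMultiset, degMultiset, ← Multiset.map_univ_val_equiv e.toEquiv, Multiset.map_map]
  exact Multiset.map_congr rfl fun v _ => Nat.card_congr (e.mapNeighborSet v)

theorem stmt18 {P : Type*} [Fintype P] [PartialOrder P] (h : ¬ ContainsX P) :
    degMultiset (orderSkeleton P) = degMultiset (chainSkeleton P) :=
  degMultiset_eq_of_iso (orderSkeletonIsoChainSkeleton h)
end
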